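/- Let a > 0, b > 0, ζ > 0, μ ≥ 0. Then for all real s > (2μ)^{1/a} the Laplace transform identity ∫_0^∞ e^{-st} t^{b-1} E_{a,b}^{ζ}(-μ t^a) dt = s^{aζ - b} / (s^a + μ)^ζ holds, provided the integral converges absolutely; in particular it holds with ζ = n+1 a positive integer. -/

import Mathlib

/-!
Expand `E` termwise. The term `t ^ (a k + b - 1) e^{-st}` has Laplace transform
`Γ(a k + b) / s ^ (a k + b)`, which cancels the `Γ(a k + b)` of the Prabhakar coefficient, leaving
`s ^ (-b)` times the binomial series `∑ (ζ)_k / k! (-μ / s^a)^k = (1 + μ / s^a)^(-ζ)`. The binomial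
series is itself obtained by the same termwise integration, applied to the Gamma integral of
`t ^ (ζ - 1) e^{-(1 - y) t}`. Both interchanges of sum and integral are justified by the absolute
convergence of `∑ Γ(ζ + k) / k! x^k` for `|x| < 1` (ratio test); in the theorem `x = μ / s^a`,
and `μ < s^a` follows from `s > (2μ)^(1/a)`.
-/

open MeasureTheory Real Set
open scoped Nat

theorem integral_tsum_mul_rpow_mul_exp_neg_mul_Ioi {c p : ℕ → ℝ} {s : ℝ} (hp : ∀ k, 0 < p k)
    (hs : 0 < s) (hsum : Summable fun k => ‖c k‖ * ((1 / s) ^ p k * Gamma (p k))) :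
    ∫ t in Ioi 0, ∑' k, c k * (t ^ (p k - 1) * exp (-(s * t)))
      = ∑' k, c k * ((1 / s) ^ p k * Gamma (p k)) := by
  have hint k : IntegrableOn (fun t => t ^ (p k - 1) * exp (-(s * t))) (Ioi 0) :=
    .of_integral_ne_zero <| by
      rw [integral_rpow_mul_exp_neg_mul_Ioi (hp k) hs]
      exact (mul_pos (by positivity) (Gamma_pos_of_pos (hp k))).ne'
  have hnorm k : ∫ t in Ioi 0, ‖c k * (t ^ (p k - 1) * exp (-(s * t)))‖
      = ‖c k‖ * ((1 / s) ^ p k * Gamma (p k)) := by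
    rw [← integral_rpow_mul_exp_neg_mul_Ioi (hp k) hs, ← integral_const_mul]
    refine setIntegral_congr_fun measurableSet_Ioi fun t (ht : 0 < t) => ?_
    rw [norm_mul, norm_of_nonneg (by positivity : 0 ≤ t ^ (p k - 1) * exp (-(s * t)))]
  rw [← integral_tsum_of_summable_integral_norm (fun k => (hint k).const_mul (c k))
    (by simpa only [hnorm] using hsum)]
  exact tsum_congr fun k => by rw [integral_const_mul, integral_rpow_mul_exp_neg_mul_Ioi (hp k) hs]

theorem summable_gamma_add_mul_pow_div_factorial {ζ x : ℝ} (hζ : 0 < ζ) (hx : |x| < 1) :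
    Summable fun k : ℕ => Gamma (ζ + k) * x ^ k / k ! := by
  rcases eq_or_ne x 0 with rfl | hx0
  · refine summable_of_ne_finset_zero (s := {0}) fun k hk => ?_
    simp_all
  have hΓ (k : ℕ) : 0 < Gamma (ζ + k) := Gamma_pos_of_pos (by positivity)
  have hsucc (k : ℕ) : Gamma (ζ + (k + 1 : ℕ)) * x ^ (k + 1) / (k + 1)!
      = (ζ + 1 * k) / (1 + 1 * k) * x * (Gamma (ζ + k) * x ^ k / k !) := by
    rw [Nat.cast_succ, ← add_assoc, Gamma_add_one (by positivity), Nat.factorial_succ]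
    push_cast
    field_simp
    ring
  refine summable_of_ratio_test_tendsto_lt_one hx
    (.of_forall fun k => by have := hΓ k; positivity) ?_
  have hlim := (tendsto_add_mul_div_add_mul_atTop_nhds ζ 1 1 one_ne_zero).mul_const x |>.norm
  rw [div_one, one_mul, Real.norm_eq_abs] at hlim
  refine hlim.congr fun k => ?_
  have := hΓ k
  rw [hsucc, norm_mul (_ * x),
    mul_div_cancel_right₀ _ (by simp [hx0, this.ne', Nat.factorial_ne_zero]), norm_mul]

theorem tsum_gamma_add_mul_pow_div_factorial {ζ y : ℝ} (hζ : 0 < ζ) (hy : |y| < 1) :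
    ∑' k : ℕ, Gamma (ζ + k) * y ^ k / k ! = Gamma ζ * (1 - y) ^ (-ζ) := by
  have h1y : 0 < 1 - y := by linarith [le_abs_self y]
  have hsum : Summable fun k : ℕ => ‖y ^ k / (k ! : ℝ)‖ * ((1 / 1) ^ (ζ + k) * Gamma (ζ + k)) := by
    refine (summable_gamma_add_mul_pow_div_factorial hζ ((abs_abs y).symm ▸ hy)).congr fun k => ?_
    rw [norm_div, norm_pow, Real.norm_eq_abs, RCLike.norm_natCast, div_one, one_rpow]
    ring
  have hseries (t : ℝ) (ht : 0 < t) :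
      ∑' k : ℕ, y ^ k / k ! * (t ^ (ζ + k - 1) * exp (-(1 * t)))
        = t ^ (ζ - 1) * exp (-((1 - y) * t)) :=
    calc _ = ∑' k : ℕ, t ^ (ζ - 1) * exp (-t) * ((y * t) ^ k / k !) :=
          tsum_congr fun k => by
            rw [add_sub_right_comm, rpow_add ht, rpow_natCast, mul_pow, one_mul]
            ring
      _ = t ^ (ζ - 1) * exp (-t) * exp (y * t) := by
          rw [tsum_mul_left, (NormedSpace.expSeries_div_hasSum_exp (y * t)).tsum_eq,
            ← exp_eq_exp_ℝ]
      _ = _ := by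
          rw [mul_assoc, ← exp_add]
          ring_nf
  calc ∑' k : ℕ, Gamma (ζ + k) * y ^ k / k !
      = ∑' k : ℕ, y ^ k / k ! * ((1 / 1) ^ (ζ + k) * Gamma (ζ + k)) :=
        tsum_congr fun k => by rw [div_one, one_rpow]; ring
    _ = ∫ t in Ioi 0, ∑' k : ℕ, y ^ k / k ! * (t ^ (ζ + k - 1) * exp (-(1 * t))) :=
        (integral_tsum_mul_rpow_mul_exp_neg_mul_Ioi (fun k => by positivity) one_pos hsum).symm
    _ = ∫ t in Ioi 0, t ^ (ζ - 1) * exp (-((1 - y) * t)) :=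
        setIntegral_congr_fun measurableSet_Ioi hseries
    _ = Gamma ζ * (1 - y) ^ (-ζ) := by
        rw [integral_rpow_mul_exp_neg_mul_Ioi hζ h1y, one_div, inv_rpow h1y.le, rpow_neg h1y.le,
          mul_comm]

noncomputable def prabhakarCoeff (a b ζ : ℝ) (k : ℕ) : ℝ :=
  Gamma (ζ + k) / Gamma ζ / (k ! * Gamma (a * k + b))

theorem prabhakarCoeff_nonneg {a b ζ : ℝ} (hζ : 0 < ζ) {k : ℕ} (hk : 0 < a * k + b) :
    0 ≤ prabhakarCoeff a b ζ k := by
  have := Gamma_pos_of_pos hk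
  have := Gamma_pos_of_pos (add_pos_of_pos_of_nonneg hζ k.cast_nonneg)
  have := Gamma_pos_of_pos hζ
  unfold prabhakarCoeff
  positivity

theorem prabhakarCoeff_mul_pow_mul_laplace_rpow {a b ζ s : ℝ} (hs : 0 < s) (m : ℝ) {k : ℕ}
    (hΓ : Gamma (a * k + b) ≠ 0) :
    prabhakarCoeff a b ζ k * m ^ k * ((1 / s) ^ (a * k + b) * Gamma (a * k + b))
      = s ^ (-b) / Gamma ζ * (Gamma (ζ + k) * (m / s ^ a) ^ k / k !) := by
  have hsk : (1 / s) ^ (a * k + b) = s ^ (-b) / (s ^ a) ^ k := by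
    rw [one_div, inv_rpow hs.le, ← rpow_natCast, ← rpow_mul hs.le, ← rpow_neg hs.le,
      div_eq_mul_inv, ← rpow_neg hs.le, ← rpow_add hs]
    ring_nf
  rw [prabhakarCoeff, hsk, div_pow]
  generalize Gamma (a * k + b) = g at hΓ ⊢
  field_simp

theorem prabhakar_laplace_integrand_eq_tsum {a b ζ μ s t : ℝ} (ht : 0 < t) :
    exp (-(s * t)) * t ^ (b - 1) * ∑' k : ℕ, Gamma (ζ + k) / Gamma ζ * (-(μ * t ^ a)) ^ k
        / (k ! * Gamma (a * k + b))
      = ∑' k : ℕ, prabhakarCoeff a b ζ k * (-μ) ^ k * (t ^ (a * k + b - 1) * exp (-(s * t))) := by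
  rw [← tsum_mul_left]
  refine tsum_congr fun k => ?_
  rw [neg_mul_eq_neg_mul μ, mul_pow, ← rpow_natCast (t ^ a), ← rpow_mul ht.le, add_sub_assoc,
    rpow_add ht, prabhakarCoeff]
  ring

theorem rpow_neg_mul_one_add_div_rpow_neg {a b ζ s μ : ℝ} (hs : 0 < s) (hμ : 0 ≤ μ) :
    s ^ (-b) * (1 + μ / s ^ a) ^ (-ζ) = s ^ (a * ζ - b) / (s ^ a + μ) ^ ζ := by
  have hsa : 0 < s ^ a := by positivity
  have hq : 0 ≤ s ^ a / (s ^ a + μ) := by positivity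
  rw [one_add_div hsa.ne', ← inv_div, inv_rpow hq, ← rpow_neg hq, neg_neg,
    div_rpow hsa.le (by positivity), ← rpow_mul hs.le, sub_eq_add_neg, rpow_add hs, rpow_neg hs.le]
  ring

theorem prabhakar_laplace_general
    (a b ζ μ : ℝ) (ha : 0 < a) (hb : 0 < b) (hζ : 0 < ζ) (hμ : 0 ≤ μ)
    (E : ℝ → ℝ)
    (hE : ∀ x : ℝ, E x = ∑' k : ℕ, (Real.Gamma (ζ + k) / Real.Gamma ζ) *
        (-(μ * x ^ a)) ^ k / ((k.factorial : ℝ) * Real.Gamma (a * k + b)))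
    (s : ℝ) (hs : (2 * μ) ^ (1 / a) < s) :
    ∫ t in Set.Ioi (0 : ℝ), Real.exp (-(s * t)) * t ^ (b - 1) * E t
      = s ^ (a * ζ - b) / (s ^ a + μ) ^ ζ := by
  have hs0 : 0 < s := (rpow_nonneg (by positivity) _).trans_lt hs
  have h2μ : 2 * μ < s ^ a :=
    (rpow_inv_lt_iff_of_pos (by positivity) hs0.le ha).mp (by rwa [one_div] at hs)
  have hx : |μ / s ^ a| < 1 := by
    rw [abs_of_nonneg (by positivity), div_lt_one (by positivity)]
    linarith
  have hp (k : ℕ) : 0 < a * k + b := by positivity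
  have hΓ (k : ℕ) : Gamma (a * k + b) ≠ 0 := (Gamma_pos_of_pos (hp k)).ne'
  have hsum : Summable fun k => ‖prabhakarCoeff a b ζ k * (-μ) ^ k‖
      * ((1 / s) ^ (a * k + b) * Gamma (a * k + b)) := by
    refine ((summable_gamma_add_mul_pow_div_factorial hζ hx).mul_left (s ^ (-b) / Gamma ζ)).congr
      fun k => ?_
    rw [← prabhakarCoeff_mul_pow_mul_laplace_rpow hs0 μ (hΓ k), norm_mul, norm_pow, norm_neg,
      norm_of_nonneg hμ, norm_of_nonneg (prabhakarCoeff_nonneg hζ (hp k))]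
  calc ∫ t in Ioi 0, exp (-(s * t)) * t ^ (b - 1) * E t
      = ∫ t in Ioi 0, ∑' k, prabhakarCoeff a b ζ k * (-μ) ^ k
          * (t ^ (a * k + b - 1) * exp (-(s * t))) :=
        setIntegral_congr_fun measurableSet_Ioi fun t ht => by
          rw [hE, prabhakar_laplace_integrand_eq_tsum ht]
    _ = ∑' k, prabhakarCoeff a b ζ k * (-μ) ^ k * ((1 / s) ^ (a * k + b) * Gamma (a * k + b)) :=
        integral_tsum_mul_rpow_mul_exp_neg_mul_Ioi hp hs0 hsum
    _ = s ^ (-b) / Gamma ζ * ∑' k : ℕ, Gamma (ζ + k) * (-(μ / s ^ a)) ^ k / k ! := by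
        rw [← tsum_mul_left]
        exact tsum_congr fun k => by
          rw [prabhakarCoeff_mul_pow_mul_laplace_rpow hs0 _ (hΓ k), neg_div]
    _ = s ^ (a * ζ - b) / (s ^ a + μ) ^ ζ := by
        rw [tsum_gamma_add_mul_pow_div_factorial hζ (by rwa [abs_neg]), sub_neg_eq_add,
          ← rpow_neg_mul_one_add_div_rpow_neg hs0 hμ]
        field_simp [(Gamma_pos_of_pos hζ).ne']

/-- Laplace transform of `t^{b-1} E_{a,b}^ζ(-μ t^a)`:
`∫_0^∞ e^{-st} t^{b-1} E_{a,b}^ζ(-μ t^a) dt = s^{aζ-b} / (s^a + μ)^ζ`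
for `s > (2μ)^{1/a}`, assuming absolute convergence of the integral. -/
theorem prabhakar_laplace
    (a b ζ μ : ℝ) (ha : 0 < a) (hb : 0 < b) (hζ : 0 < ζ) (hμ : 0 ≤ μ)
    (E : ℝ → ℝ)
    (hE : ∀ x : ℝ, E x = ∑' k : ℕ, (Real.Gamma (ζ + k) / Real.Gamma ζ) *
        (-(μ * x ^ a)) ^ k / ((k.factorial : ℝ) * Real.Gamma (a * k + b)))
    (s : ℝ) (hs : (2 * μ) ^ (1 / a) < s)
    (hint : MeasureTheory.IntegrableOn
      (fun t : ℝ => Real.exp (-(s * t)) * t ^ (b - 1) * E t) (Set.Ioi 0)) :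
    ∫ t in Set.Ioi (0 : ℝ), Real.exp (-(s * t)) * t ^ (b - 1) * E t
      = s ^ (a * ζ - b) / (s ^ a + μ) ^ ζ :=
  prabhakar_laplace_general a b ζ μ ha hb hζ hμ E hE s hs
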